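/- The set of eigenvalues of the Markov operator of the edge lamplighter random walk on the discrete circle C_n equals {1} ∪ {0} ∪ {cos(hπ/k) : 3 ≤ k ≤ n+1, 1 ≤ h ≤ k−1, gcd(h,k)=1} when n is odd, and equals {1} ∪ {−1} ∪ {0} ∪ {cos(hπ/k) : 3 ≤ k ≤ n+1, 1 ≤ h ≤ k−1, gcd(h,k)=1} when n is even. -/

import Mathlib

noncomputable section

/-- The edges of the discrete circle `C_n` are indexed by `ZMod n`: edge `i` is
`{i, i+1}`. `cycDelta n i` is the indicator lamp configuration of the edge `i`. -/
def cycDelta (n : ℕ) (i : ZMod n) : ZMod n → ZMod 2 := fun j => if j = i then 1 else 0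

/-- The Markov operator of the edge lamplighter random walk on the discrete circle
`C_n` (lamps on the edges, edge `i = {i,i+1}` indexed by `i : ZMod n`), acting on the
`2^n·n`-dimensional space of complex functions on `𝓛(E_n) = {0,1}^{E_n} × C_n`:
from `(ω,x)` the lamplighter moves to `x+1` or `x−1` with equal probability and
randomizes the lamp on the traversed edge. -/
def cycLampM (n : ℕ) :
    (((ZMod n → ZMod 2) × ZMod n) → ℂ) →ₗ[ℂ] (((ZMod n → ZMod 2) × ZMod n) → ℂ) where
  toFun F := fun p =>
    (1 / 4 : ℂ) * (F (p.1, p.2 + 1) + F (p.1 + cycDelta n p.2, p.2 + 1)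
      + F (p.1, p.2 - 1) + F (p.1 + cycDelta n (p.2 - 1), p.2 - 1))
  map_add' F₁ F₂ := by funext p; simp only [Pi.add_apply]; ring
  map_smul' c F := by funext p; simp only [Pi.smul_apply, RingHom.id_apply, smul_eq_mul]; ring

namespace CLS

def sgn (a : ZMod 2) : ℂ := if a = 0 then 1 else -1

lemma two_cases : ∀ a : ZMod 2, a = 0 ∨ a = 1 := by decide

lemma sgn_add (a b : ZMod 2) : sgn (a + b) = sgn a * sgn b := by
  rcases two_cases a with h | h <;> rcases two_cases b with h' | h' <;>
    subst h <;> subst h' <;> simp [sgn, show (1 + 1 : ZMod 2) = 0 from rfl]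

lemma sgn_zero : sgn 0 = 1 := by simp [sgn]

lemma sgn_one : sgn 1 = -1 := by simp [sgn]

variable (n : ℕ) [NeZero n]

def chi (S ω : ZMod n → ZMod 2) : ℂ := sgn (∑ i, S i * ω i)

lemma chi_add (S ω θ : ZMod n → ZMod 2) :
    chi n S (ω + θ) = chi n S ω * chi n S θ := by
  unfold chi
  rw [← sgn_add]
  congr 1
  rw [← Finset.sum_add_distrib]
  exact Finset.sum_congr rfl fun i _ => by simp [mul_add]

lemma chi_delta (S : ZMod n → ZMod 2) (i : ZMod n) :
    chi n S (cycDelta n i) = sgn (S i) := by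
  unfold chi cycDelta
  congr 1
  rw [Finset.sum_congr rfl (fun j _ => by rw [mul_ite, mul_one, mul_zero])]
  simp

lemma chi_comm (S ω : ZMod n → ZMod 2) : chi n S ω = chi n ω S := by
  unfold chi; congr 1; exact Finset.sum_congr rfl fun i _ => mul_comm _ _

lemma chi_zero (S : ZMod n → ZMod 2) : chi n S 0 = 1 := by
  unfold chi; simp [sgn_zero]

lemma sum_chi (η : ZMod n → ZMod 2) (hη : η ≠ 0) :
    ∑ S : ZMod n → ZMod 2, chi n S η = 0 := by
  obtain ⟨i₀, hi₀⟩ : ∃ i, η i ≠ 0 := by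
    by_contra h; push_neg at h; exact hη (funext h)
  have h1 : η i₀ = 1 := (two_cases _).resolve_left hi₀
  have key : ∀ S : ZMod n → ZMod 2, chi n (S + cycDelta n i₀) η = - chi n S η := by
    intro S
    rw [chi_comm, chi_add, chi_comm n η S, chi_delta, h1, sgn_one]
    ring
  have : ∑ S : ZMod n → ZMod 2, chi n (cycDelta n i₀ + S) η
      = ∑ S : ZMod n → ZMod 2, chi n S η :=
    Fintype.sum_equiv (Equiv.addLeft (cycDelta n i₀))
      (fun S => chi n (cycDelta n i₀ + S) η) (fun S => chi n S η) (fun S => by simp)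
  have h2 : ∑ S : ZMod n → ZMod 2, chi n (cycDelta n i₀ + S) η
      = - ∑ S : ZMod n → ZMod 2, chi n S η := by
    rw [← Finset.sum_neg_distrib]
    exact Finset.sum_congr rfl fun S _ => by rw [add_comm]; exact key S
  have h3 := this.symm.trans h2
  linear_combination h3 / 2

/-- coefficient: `1` if edge `i` is present (lamp indicator zero in `S`), else `0`. -/
def aco (S : ZMod n → ZMod 2) (i : ZMod n) : ℂ := if S i = 0 then 1 else 0

lemma one_add_sgn (s : ZMod 2) : 1 + sgn s = 2 * (if s = 0 then (1:ℂ) else 0) := by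
  rcases two_cases s with h | h <;> subst h <;> simp [sgn] <;> norm_num

lemma sum_four {ι : Type*} (s : Finset ι) (a b c d : ι → ℂ) :
    ∑ i ∈ s, (1/4:ℂ) * (a i + b i + c i + d i)
      = (1/4:ℂ) * (∑ i ∈ s, a i + ∑ i ∈ s, b i + ∑ i ∈ s, c i + ∑ i ∈ s, d i) := by
  rw [mul_add, mul_add, mul_add, Finset.mul_sum, Finset.mul_sum, Finset.mul_sum,
    Finset.mul_sum, ← Finset.sum_add_distrib, ← Finset.sum_add_distrib,
    ← Finset.sum_add_distrib]
  exact Finset.sum_congr rfl fun i _ => by ring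

omit [NeZero n] in
lemma self_add_self (η : ZMod n → ZMod 2) : η + η = 0 := by
  funext j
  have : ∀ a : ZMod 2, a + a = 0 := by decide
  exact this _

omit [NeZero n] in
lemma delta_add_delta (i : ZMod n) : cycDelta n i + cycDelta n i = 0 :=
  self_add_self n _

lemma card_fun : (Finset.univ : Finset (ZMod n → ZMod 2)).card = 2^n := by
  rw [Finset.card_univ, Fintype.card_fun]
  simp [ZMod.card]

/-- The key bridge: eigenvalues of the lamplighter operator correspond to
eigenvalues of edge-deleted cycle operators. -/
lemma eigen_iff (μ : ℂ) : Module.End.HasEigenvalue (cycLampM n) μ ↔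
    ∃ (S : ZMod n → ZMod 2) (f : ZMod n → ℂ), f ≠ 0 ∧
      ∀ x, 2 * μ * f x = aco n S x * f (x+1) + aco n S (x-1) * f (x-1) := by
  constructor
  · intro h
    obtain ⟨F, hF⟩ := h.exists_hasEigenvector
    have hFne : F ≠ 0 := hF.2
    have hFeq : cycLampM n F = μ • F := Module.End.mem_eigenspace_iff.1 hF.1
    have hpt : ∀ ω x, μ * F (ω, x) = (1/4 : ℂ) * (F (ω, x + 1) + F (ω + cycDelta n x, x + 1)
        + F (ω, x - 1) + F (ω + cycDelta n (x - 1), x - 1)) := by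
      intro ω x
      have := congrFun hFeq (ω, x)
      simp only [cycLampM, LinearMap.coe_mk, AddHom.coe_mk, Pi.smul_apply, smul_eq_mul] at this
      exact this.symm
    set fS : (ZMod n → ZMod 2) → (ZMod n) → ℂ :=
      fun S x => ∑ ω : ZMod n → ZMod 2, chi n S ω * F (ω, x) with hfS
    have reidx : ∀ (S : ZMod n → ZMod 2) (i : ZMod n) (y : ZMod n),
        ∑ ω : ZMod n → ZMod 2, chi n S ω * F (ω + cycDelta n i, y)
          = sgn (S i) * fS S y := by
      intro S i y
      have := Fintype.sum_equiv (Equiv.addRight (cycDelta n i))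
        (fun ω => chi n S ω * F (ω + cycDelta n i, y))
        (fun θ => chi n S (θ + cycDelta n i) * F (θ, y))
        (fun ω => by
          simp only [Equiv.coe_addRight]
          rw [add_assoc, delta_add_delta, add_zero])
      rw [this, hfS]
      rw [Finset.mul_sum]
      refine Finset.sum_congr rfl fun θ _ => ?_
      show chi n S (θ + cycDelta n i) * F (θ, y) = _
      rw [chi_add, chi_delta]; ring
    have claimA : ∀ (S : ZMod n → ZMod 2) (x : ZMod n),
        2 * μ * fS S x = aco n S x * fS S (x+1) + aco n S (x-1) * fS S (x-1) := by
      intro S x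
      have expand : 2 * μ * fS S x = 2 * ∑ ω : ZMod n → ZMod 2, chi n S ω * (μ * F (ω, x)) := by
        rw [hfS]; simp only; rw [Finset.mul_sum, Finset.mul_sum]
        exact Finset.sum_congr rfl fun ω _ => by ring
      rw [expand]
      have : ∀ ω : ZMod n → ZMod 2, chi n S ω * (μ * F (ω, x))
          = (1/4 : ℂ) * (chi n S ω * F (ω, x+1) + chi n S ω * F (ω + cycDelta n x, x+1)
            + chi n S ω * F (ω, x-1) + chi n S ω * F (ω + cycDelta n (x-1), x-1)) := by
        intro ω; rw [hpt ω x]; ring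
      rw [Finset.sum_congr rfl fun ω _ => this ω, sum_four]
      have s1 : ∑ ω : ZMod n → ZMod 2, chi n S ω * F (ω, x+1) = fS S (x+1) := rfl
      have s3 : ∑ ω : ZMod n → ZMod 2, chi n S ω * F (ω, x-1) = fS S (x-1) := rfl
      rw [s1, s3, reidx S x (x+1), reidx S (x-1) (x-1)]
      have r1 := one_add_sgn (S x)
      have r2 := one_add_sgn (S (x-1))
      unfold aco
      linear_combination (fS S (x+1)) / 2 * r1 + (fS S (x-1)) / 2 * r2
    have claimB : ∃ S : ZMod n → ZMod 2, fS S ≠ 0 := by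
      by_contra hall
      push_neg at hall
      apply hFne
      funext p
      obtain ⟨θ, x⟩ := p
      have hz : ∀ S : ZMod n → ZMod 2, ∑ ω : ZMod n → ZMod 2, chi n S θ * (chi n S ω * F (ω, x)) = 0 := by
        intro S
        rw [← Finset.mul_sum]
        have : fS S x = 0 := congrFun (hall S) x
        rw [hfS] at this
        simp only at this
        rw [this, mul_zero]
      have hsum : ∑ S : ZMod n → ZMod 2, ∑ ω : ZMod n → ZMod 2,
          chi n S θ * (chi n S ω * F (ω, x)) = 0 := by
        rw [Finset.sum_congr rfl fun S _ => hz S]; simp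
      rw [Finset.sum_comm] at hsum
      have inner : ∀ ω : ZMod n → ZMod 2,
          ∑ S : ZMod n → ZMod 2, chi n S θ * (chi n S ω * F (ω, x))
            = (if ω = θ then (2^n : ℂ) * F (ω, x) else 0) := by
        intro ω
        have : ∀ S : ZMod n → ZMod 2, chi n S θ * (chi n S ω * F (ω, x))
            = chi n S (θ + ω) * F (ω, x) := by
          intro S; rw [chi_add]; ring
        rw [Finset.sum_congr rfl fun S _ => this S, ← Finset.sum_mul]
        by_cases hωθ : ω = θ
        · subst hωθ
          rw [if_pos rfl]
          rw [show ω + ω = 0 from self_add_self n ω]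
          rw [Finset.sum_congr rfl fun S _ => chi_zero n S, Finset.sum_const, card_fun]
          push_cast
          ring
        · rw [if_neg hωθ, sum_chi n (θ + ω), zero_mul]
          intro hc
          apply hωθ
          have h4 : ω = -θ := eq_neg_of_add_eq_zero_right hc
          rw [h4]
          funext j
          have : ∀ a : ZMod 2, -a = a := by decide
          exact this _
      rw [Finset.sum_congr rfl fun ω _ => inner ω, Finset.sum_ite_eq' Finset.univ θ
        (fun ω => (2^n : ℂ) * F (ω, x))] at hsum
      simp only [Finset.mem_univ, if_true] at hsum
      have h2n : (2^n : ℂ) ≠ 0 := pow_ne_zero n two_ne_zero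
      exact (mul_eq_zero.1 hsum).resolve_left h2n
    obtain ⟨S, hS⟩ := claimB
    exact ⟨S, fS S, hS, claimA S⟩
  · rintro ⟨S, f, hf, heq⟩
    obtain ⟨x₀, hx₀⟩ : ∃ x, f x ≠ 0 := by
      by_contra h; push_neg at h; exact hf (funext h)
    set F : ((ZMod n → ZMod 2) × ZMod n) → ℂ := fun p => chi n S p.1 * f p.2 with hFdef
    apply Module.End.hasEigenvalue_of_hasEigenvector (x := F)
    constructor
    · apply Module.End.mem_eigenspace_iff.2
      funext p
      obtain ⟨ω, x⟩ := p
      simp only [cycLampM, LinearMap.coe_mk, AddHom.coe_mk, Pi.smul_apply, smul_eq_mul, hFdef]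
      have e1 : chi n S (ω + cycDelta n x) = chi n S ω * sgn (S x) := by
        rw [chi_add, chi_delta]
      have e2 : chi n S (ω + cycDelta n (x - 1)) = chi n S ω * sgn (S (x - 1)) := by
        rw [chi_add, chi_delta]
      have key := heq x
      unfold aco at key
      have r1 := one_add_sgn (S x)
      have r2 := one_add_sgn (S (x - 1))
      calc (1/4 : ℂ) * (chi n S ω * f (x+1) + chi n S (ω + cycDelta n x) * f (x+1)
            + chi n S ω * f (x-1) + chi n S (ω + cycDelta n (x-1)) * f (x-1))
          = (1/4 : ℂ) * chi n S ω * ((1 + sgn (S x)) * f (x+1) + (1 + sgn (S (x-1))) * f (x-1)) := by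
            rw [e1, e2]; ring
        _ = (1/4 : ℂ) * chi n S ω * (2 * ((if S x = 0 then (1:ℂ) else 0) * f (x+1)
              + (if S (x-1) = 0 then (1:ℂ) else 0) * f (x-1))) := by rw [r1, r2]; ring
        _ = (1/4 : ℂ) * chi n S ω * (2 * (2 * μ * f x)) := by rw [← key]
        _ = μ * (chi n S ω * f x) := by ring
    · intro h0
      apply hx₀
      have := congrFun h0 (0, x₀)
      simpa [hFdef, chi_zero] using this

-- ===== spectral analysis lemmas =====

lemma nat_succ_ne (l : ℕ) : ((l:ℂ)+1) ≠ 0 := by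
  intro h
  have : ((l+1:ℕ):ℂ) = 0 := by push_cast; linear_combination h
  exact Nat.cast_ne_zero.2 (Nat.succ_ne_zero l) this
open Complex in
lemma cos_reduce_int (L : ℕ) (hL : 1 ≤ L) (m : ℤ) (hnd : ¬ ((L+1:ℤ) ∣ m)) :
    ∃ j : ℕ, 1 ≤ j ∧ j ≤ L ∧ Real.cos (j*Real.pi/(L+1)) = Real.cos (m*Real.pi/(L+1)) := by
  have hL1 : ((L:ℝ)+1) ≠ 0 := by positivity
  set P : ℤ := 2*(L+1) with hP
  have hPpos : 0 < P := by omega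
  set q : ℤ := m / P with hq
  set m' : ℤ := m % P with hm'
  have hm'0 : 0 ≤ m' := Int.emod_nonneg m (by omega)
  have hm'P : m' < P := Int.emod_lt_of_pos m hPpos
  have hmeq : m = P * q + m' := (Int.mul_ediv_add_emod m P).symm
  have hnd' : ¬ ((L+1:ℤ) ∣ m') := by
    intro hd
    apply hnd
    have hPd : (L+1:ℤ) ∣ P := ⟨2, by ring⟩
    rw [hmeq]
    exact dvd_add (hPd.mul_right q) hd
  have hcos : Real.cos (m*Real.pi/(L+1)) = Real.cos (m'*Real.pi/(L+1)) := by
    have : (m:ℝ)*Real.pi/(L+1) = m'*Real.pi/(L+1) + q*(2*Real.pi) := by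
      have hm : (m:ℝ) = P*q + m' := by exact_mod_cast congrArg (Int.cast : ℤ → ℝ) hmeq
      rw [hm]
      push_cast [hP]
      field_simp
      ring
    rw [this, Real.cos_add_int_mul_two_pi]
  set j₁ : ℕ := m'.toNat with hj₁
  have hj₁m : (j₁ : ℤ) = m' := Int.toNat_of_nonneg hm'0
  have hj₁ne : j₁ ≠ 0 ∧ j₁ ≠ L + 1 ∧ j₁ ≤ 2*L+1 := by
    refine ⟨?_, ?_, ?_⟩
    · intro h; apply hnd'; rw [← hj₁m, h]; simp
    · intro h; apply hnd'; rw [← hj₁m, h]; exact ⟨1, by push_cast; ring⟩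
    · omega
  rcases le_or_gt j₁ L with hc | hc
  · refine ⟨j₁, by omega, hc, ?_⟩
    rw [hcos]
    have hcast : ((j₁:ℕ):ℝ) = ((m':ℤ):ℝ) := by exact_mod_cast hj₁m
    rw [hcast]
  · -- L + 2 ≤ j₁ ≤ 2L+1
    have hj₁2 : L + 2 ≤ j₁ := by omega
    refine ⟨2*(L+1) - j₁, by omega, by omega, ?_⟩
    rw [hcos]
    have e1 : ((2*(L+1) - j₁ : ℕ) : ℝ) * Real.pi / (L+1)
        = 2*Real.pi - (j₁:ℝ)*Real.pi/(L+1) := by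
      have : ((2*(L+1) - j₁ : ℕ) : ℝ) = 2*((L:ℝ)+1) - j₁ := by
        have : (2*(L+1) - j₁) + j₁ = 2*(L+1) := by omega
        have := congrArg (Nat.cast : ℕ → ℝ) this
        push_cast at this
        linarith
      rw [this]
      field_simp
    rw [e1, Real.cos_two_pi_sub]
    have hcast : ((j₁:ℕ):ℝ) = ((m':ℤ):ℝ) := by exact_mod_cast hj₁m
    rw [hcast]

lemma cheb (μ : ℂ) (ℓ : ℕ) (hℓ : 1 ≤ ℓ) (w : ℕ → ℂ)
    (h0 : ∀ t, t + 1 ≤ ℓ → w (t+1) = 2*μ*w t - (if t = 0 then 0 else w (t-1)))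
    (hend : w ℓ = 0)
    (hne : ∃ t, t < ℓ ∧ w t ≠ 0) :
    ∃ j : ℕ, 1 ≤ j ∧ j ≤ ℓ ∧ μ = Complex.ofReal (Real.cos (j * Real.pi / (ℓ+1))) := by
  obtain ⟨t₀, ht₀, hwt₀⟩ := hne
  by_cases hμ : μ^2 = 1
  · exfalso
    have hμ0 : μ ≠ 0 := by intro h; rw [h] at hμ; norm_num at hμ
    have claim : ∀ t, t ≤ ℓ → w t = w 0 * (t+1) * μ^t := by
      intro t
      induction t using Nat.strong_induction_on with
      | _ t ih =>
        match t with
        | 0 => intro _; simp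
        | 1 => intro h1
               rw [h0 0 h1]
               simp
               ring
        | (s+2) => intro hs
                   rw [h0 (s+1) (by omega)]
                   rw [if_neg (by omega)]
                   simp only [Nat.add_sub_cancel]
                   rw [ih (s+1) (by omega) (by omega), ih s (by omega) (by omega)]
                   have e1 : μ^(s+2) = μ^s := by
                     rw [pow_add, hμ, mul_one]
                   have e2 : μ^(s+1) = μ^s * μ := pow_succ μ s
                   rw [e1, e2]
                   push_cast
                   linear_combination (2 * w 0 * (s+2) * μ^s) * hμ
    have hw0 : w 0 ≠ 0 := by
      intro h
      apply hwt₀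
      rw [claim t₀ (by omega), h]
      ring
    have := claim ℓ le_rfl
    rw [hend] at this
    have : w 0 * (ℓ+1) = 0 ∨ μ^ℓ = 0 := by
      rcases mul_eq_zero.1 this.symm with h | h
      · exact Or.inl h
      · exact Or.inr h
    rcases this with h | h
    · rcases mul_eq_zero.1 h with h' | h'
      · exact hw0 h'
      · exact nat_succ_ne ℓ h'
    · exact pow_ne_zero ℓ hμ0 h
  · -- μ² ≠ 1
    obtain ⟨z, hz⟩ := Complex.cos_surjective μ
    have hsin : Complex.sin z ≠ 0 := by
      intro h
      apply hμ
      have := Complex.sin_sq_add_cos_sq z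
      rw [h, hz] at this
      simpa using this
    have claim : ∀ t, t ≤ ℓ → w t * Complex.sin z = w 0 * Complex.sin ((t+1) * z) := by
      intro t
      induction t using Nat.strong_induction_on with
      | _ t ih =>
        match t with
        | 0 => intro _; norm_num
        | 1 => intro h1
               rw [h0 0 h1]
               push_cast
               rw [show ((1:ℂ)+1)*z = 2*z by ring, Complex.sin_two_mul, ← hz]
               ring
        | (s+2) => intro hs
                   rw [h0 (s+1) (by omega), if_neg (by omega)]
                   simp only [Nat.add_sub_cancel]
                   have i1 := ih (s+1) (by omega) (by omega)
                   have i2 := ih s (by omega) (by omega)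
                   have key : Complex.sin ((s+2+1:ℕ) * z) + Complex.sin ((s+1:ℕ)*z)
                       = 2 * Complex.sin ((s+1+1:ℕ)*z) * Complex.cos z := by
                     have h1 := Complex.sin_add ((s+2:ℕ)*z) z
                     have h2 := Complex.sin_sub ((s+2:ℕ)*z) z
                     have e1 : ((s+2+1:ℕ):ℂ) * z = (s+2:ℕ)*z + z := by push_cast; ring
                     have e2 : ((s+1:ℕ):ℂ) * z = (s+2:ℕ)*z - z := by push_cast; ring
                     have e3 : ((s+1+1:ℕ):ℂ) * z = (s+2:ℕ)*z := by push_cast; ring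
                     rw [e1, e2, e3, h1, h2]
                     ring
                   rw [← hz]
                   push_cast at key i1 i2 ⊢
                   linear_combination -(w 0) * key + 2 * Complex.cos z * i1 - i2
    have hw0 : w 0 ≠ 0 := by
      intro h
      apply hwt₀
      have := claim t₀ (by omega)
      rw [h, zero_mul] at this
      exact (mul_eq_zero.1 this).resolve_right hsin
    have hℓz : Complex.sin ((ℓ+1 : ℕ) * z) = 0 := by
      have := claim ℓ le_rfl
      rw [hend, zero_mul] at this
      have := this.symm
      push_cast at this
      rcases mul_eq_zero.1 this with h | h
      · exact absurd h hw0
      · push_cast; exact h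
    obtain ⟨m, hm⟩ := Complex.sin_eq_zero_iff.1 hℓz
    -- (ℓ+1) * z = m * π   so z = m*π/(ℓ+1)
    have hℓ1 : ((ℓ:ℂ)+1) ≠ 0 := nat_succ_ne ℓ
    have hzval : z = (m : ℂ) * (Real.pi : ℂ) / ((ℓ:ℂ)+1) := by
      push_cast at hm
      field_simp
      linear_combination hm
    have hndvd : ¬ ((ℓ+1:ℤ) ∣ m) := by
      intro ⟨c, hc⟩
      apply hsin
      apply Complex.sin_eq_zero_iff.2
      refine ⟨c, ?_⟩
      rw [hzval, hc]
      push_cast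
      field_simp
    obtain ⟨j, hj1, hj2, hjcos⟩ := cos_reduce_int ℓ hℓ m hndvd
    refine ⟨j, hj1, hj2, ?_⟩
    rw [← hz, hzval]
    have : (m : ℂ) * (Real.pi : ℂ) / ((ℓ:ℂ)+1) = Complex.ofReal ((m:ℝ)*Real.pi/((ℓ:ℝ)+1)) := by
      push_cast
      ring
    rw [this, ← Complex.ofReal_cos, ← hjcos]

lemma cos_reduce_int2 (n : ℕ) (hn : 1 ≤ n) (m : ℤ) :
    Real.cos (2*Real.pi*m/n) = 1 ∨ (Real.cos (2*Real.pi*m/n) = -1 ∧ Even n) ∨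
      ∃ j : ℕ, 1 ≤ j ∧ 2*j < n ∧ Real.cos (2*Real.pi*m/n) = Real.cos (2*Real.pi*j/n) := by
  have hn0 : ((n:ℝ)) ≠ 0 := by positivity
  set q : ℤ := m / n with hq
  set m₁ : ℤ := m % n with hm₁
  have h0 : 0 ≤ m₁ := Int.emod_nonneg m (by exact_mod_cast Nat.cast_ne_zero.2 (by omega))
  have h1 : m₁ < n := Int.emod_lt_of_pos m (by exact_mod_cast Nat.pos_of_ne_zero (by omega))
  have hmeq : m = n * q + m₁ := (Int.mul_ediv_add_emod m n).symm
  have hcos : Real.cos (2*Real.pi*m/n) = Real.cos (2*Real.pi*m₁/n) := by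
    have : (2*Real.pi*m/n : ℝ) = 2*Real.pi*m₁/n + q*(2*Real.pi) := by
      have hm : (m:ℝ) = n*q + m₁ := by exact_mod_cast congrArg (Int.cast : ℤ → ℝ) hmeq
      rw [hm]; field_simp; ring
    rw [this, Real.cos_add_int_mul_two_pi]
  set j₁ : ℕ := m₁.toNat with hj₁
  have hj₁m : (j₁ : ℤ) = m₁ := Int.toNat_of_nonneg h0
  have hj₁n : j₁ < n := by omega
  have hcast : ((j₁:ℕ):ℝ) = ((m₁:ℤ):ℝ) := by exact_mod_cast hj₁m
  rw [hcos, ← hcast]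
  rcases Nat.eq_zero_or_pos j₁ with hz | hpos
  · left; rw [hz]; norm_num
  rcases lt_trichotomy (2*j₁) n with hlt | heq | hgt
  · right; right; exact ⟨j₁, hpos, hlt, rfl⟩
  · right; left
    constructor
    · have : (2*Real.pi*j₁/n : ℝ) = Real.pi := by
        have : ((n:ℝ)) = 2*j₁ := by exact_mod_cast heq.symm
        rw [this]; field_simp
      rw [this, Real.cos_pi]
    · exact ⟨j₁, by omega⟩
  · right; right
    refine ⟨n - j₁, by omega, by omega, ?_⟩
    have e1 : (2*Real.pi*((n - j₁ : ℕ):ℝ)/n : ℝ) = 2*Real.pi - 2*Real.pi*j₁/n := by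
      have : ((n - j₁ : ℕ):ℝ) = (n:ℝ) - j₁ := by
        have h := congrArg (Nat.cast : ℕ → ℝ) (Nat.sub_add_cancel hj₁n.le)
        push_cast at h; linarith
      rw [this]; field_simp
    rw [e1, Real.cos_two_pi_sub]

lemma cyc (μ : ℂ) (n : ℕ) (hn : 1 ≤ n) (g : ℕ → ℂ)
    (hrec : ∀ t, g (t+2) = 2*μ*g (t+1) - g t)
    (hpern : g n = g 0) (hpern1 : g (n+1) = g 1) (hg0 : g 0 ≠ 0) :
    μ = 1 ∨ (μ = -1 ∧ Even n) ∨
      ∃ m : ℕ, 1 ≤ m ∧ 2*m < n ∧ μ = Complex.ofReal (Real.cos (2*Real.pi*m/n)) := by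
  by_cases hμ : μ^2 = 1
  · set B : ℂ := μ * g 1 - g 0 with hB
    have claim : ∀ t, g t = (g 0 + B*t) * μ^t := by
      intro t
      induction t using Nat.strong_induction_on with
      | _ t ih =>
        match t with
        | 0 => simp
        | 1 => push_cast; rw [hB]; linear_combination (-(g 1)) * hμ
        | (s+2) =>
          rw [hrec s, ih (s+1) (by omega), ih s (by omega)]
          have e1 : μ^(s+2) = μ^s := by rw [pow_add, hμ, mul_one]
          have e2 : μ^(s+1) = μ^s * μ := pow_succ μ s
          rw [e1, e2]
          push_cast
          linear_combination (2 * (g 0 + B*s + B) * μ^s) * hμ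
    have hn' := claim n
    have hn1' := claim (n+1)
    have h1' : g 1 = (g 0 + B) * μ := by have := claim 1; push_cast at this; simpa using this
    push_cast at hn' hn1'
    rw [hpern] at hn'
    rw [hpern1, h1'] at hn1'
    -- derive B * μ^n = B
    have key : B * μ^n = B := by
      have e3 : μ^(n+1) = μ^n * μ := pow_succ μ n
      rw [e3] at hn1'
      push_cast at hn1'
      -- (g0+B)μ = (g0 + B(n+1)) μ^n μ ; multiply by μ : use μ² = 1
      have := congrArg (· * μ) hn1'
      have h4 : (g 0 + B) * μ * μ = (g 0 + B) := by linear_combination (g 0 + B) * hμ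
      have h5 : (g 0 + B*(n+1)) * (μ^n * μ) * μ = (g 0 + B*(n+1)) * μ^n := by
        linear_combination ((g 0 + B*(n+1)) * μ^n) * hμ
      rw [h4, h5] at this
      linear_combination hn' - this
    have hB0 : B = 0 := by
      by_contra hB0
      have hμn : μ^n = 1 := mul_left_cancel₀ hB0 (by rw [mul_one]; exact key)
      rw [hμn, mul_one] at hn'
      have : B * (n:ℂ) = 0 := by linear_combination - hn'
      rcases mul_eq_zero.1 this with h | h
      · exact hB0 h
      · exact (Nat.cast_ne_zero.2 (by omega) : (n:ℂ) ≠ 0) h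
    have hμn : μ^n = 1 := by
      rw [hB0] at hn'
      have h6 : g 0 * μ^n = g 0 * 1 := by rw [mul_one]; linear_combination - hn'
      exact mul_left_cancel₀ hg0 h6
    have : (μ - 1) * (μ + 1) = 0 := by linear_combination hμ
    rcases mul_eq_zero.1 this with h | h
    · left; linear_combination h
    · have hμ1 : μ = -1 := by linear_combination h
      right; left
      refine ⟨hμ1, ?_⟩
      rcases Nat.even_or_odd n with he | ho
      · exact he
      · exfalso
        rw [hμ1, ho.neg_one_pow] at hμn
        norm_num at hμn
  · obtain ⟨z, hz⟩ := Complex.cos_surjective μ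
    set u : ℂ := Complex.exp (z * Complex.I) with hu
    have hu0 : u ≠ 0 := Complex.exp_ne_zero _
    have huinv : u⁻¹ = Complex.exp (-(z * Complex.I)) := by
      rw [hu, ← Complex.exp_neg]
    have hsum : u + u⁻¹ = 2 * μ := by
      rw [huinv, hu, ← hz, Complex.cos]
      ring_nf
    have hneq : u - u⁻¹ ≠ 0 := by
      intro h
      apply hμ
      have huu : u = u⁻¹ := by linear_combination h
      have h2 : u * u = 1 := by
        nth_rewrite 2 [huu]; exact mul_inv_cancel₀ hu0
      have : 2 * μ = 2 * u := by rw [← hsum, ← huu]; ring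
      have hμu : μ = u := by linear_combination this / 2
      rw [hμu, sq]; exact h2
    set A : ℂ := (g 1 - g 0 * u⁻¹)/(u - u⁻¹) with hA
    set C : ℂ := (g 0 * u - g 1)/(u - u⁻¹) with hC
    have hinv : u * u⁻¹ = 1 := mul_inv_cancel₀ hu0
    have hAB0 : A + C = g 0 := by
      rw [hA, hC, ← add_div, div_eq_iff hneq]
      ring
    have hAB1 : A * u + C * u⁻¹ = g 1 := by
      rw [hA, hC, div_mul_eq_mul_div, div_mul_eq_mul_div, ← add_div, div_eq_iff hneq]
      ring
    have hchar : u^2 = 2*μ*u - 1 := by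
      have := congrArg (· * u) hsum
      linear_combination this - hinv
    have hchar' : (u⁻¹)^2 = 2*μ*u⁻¹ - 1 := by
      have := congrArg (· * u⁻¹) hsum
      linear_combination this - hinv
    have claim : ∀ t, g t = A * u^t + C * (u⁻¹)^t := by
      intro t
      induction t using Nat.strong_induction_on with
      | _ t ih =>
        match t with
        | 0 => simpa using hAB0.symm
        | 1 => simpa using hAB1.symm
        | (s+2) =>
          rw [hrec s, ih (s+1) (by omega), ih s (by omega)]
          have e1 : u^(s+2) = u^s * u^2 := by rw [← pow_add]
          have e2 : u^(s+1) = u^s * u := pow_succ u s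
          have f1 : (u⁻¹)^(s+2) = (u⁻¹)^s * (u⁻¹)^2 := by rw [← pow_add]
          have f2 : (u⁻¹)^(s+1) = (u⁻¹)^s * u⁻¹ := pow_succ u⁻¹ s
          rw [e1, e2, f1, f2, hchar, hchar']
          ring
    have hp : A * (u^n - 1) + C * ((u⁻¹)^n - 1) = 0 := by
      have := claim n
      rw [hpern, ← hAB0] at this
      linear_combination - this
    have hp1 : (A * (u^n - 1)) * u + (C * ((u⁻¹)^n - 1)) * u⁻¹ = 0 := by
      have := claim (n+1)
      rw [hpern1, ← hAB1] at this
      have e2 : u^(n+1) = u^n * u := pow_succ u n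
      have f2 : (u⁻¹)^(n+1) = (u⁻¹)^n * u⁻¹ := pow_succ u⁻¹ n
      rw [e2, f2] at this
      linear_combination - this
    have hP0 : A * (u^n - 1) = 0 := by
      have comb : (A * (u^n - 1)) * (u - u⁻¹) = 0 := by
        linear_combination hp1 - u⁻¹ * hp
      exact (mul_eq_zero.1 comb).resolve_right hneq
    have hQ0 : C * ((u⁻¹)^n - 1) = 0 := by
      linear_combination hp - hP0
    have hun : u^n = 1 := by
      by_contra hun
      have hA0 : A = 0 := by
        rcases mul_eq_zero.1 hP0 with h | h
        · exact h
        · exact absurd (by linear_combination h) hun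
      have huninv : (u⁻¹)^n ≠ 1 := by
        intro h
        apply hun
        have : (u^n) * ((u⁻¹)^n) = 1 := by
          rw [← mul_pow, hinv, one_pow]
        rw [h, mul_one] at this
        exact this
      have hC0 : C = 0 := by
        rcases mul_eq_zero.1 hQ0 with h | h
        · exact h
        · exact absurd (by linear_combination h) huninv
      apply hg0
      rw [← hAB0, hA0, hC0, add_zero]
    -- u^n = 1 : so exp(n z I) = 1
    have hexp : Complex.exp ((n:ℂ) * (z * Complex.I)) = 1 := by
      rw [Complex.exp_nat_mul, ← hu, hun]
    obtain ⟨m, hm⟩ := Complex.exp_eq_one_iff.1 hexp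
    have hzval : z = Complex.ofReal (2*Real.pi*m/n) := by
      have hI : Complex.I ≠ 0 := Complex.I_ne_zero
      have hn0 : (n:ℂ) ≠ 0 := Nat.cast_ne_zero.2 (by omega)
      have h7 : (n:ℂ) * z = 2*(Real.pi:ℂ)*m := by
        apply mul_right_cancel₀ hI
        linear_combination hm
      push_cast
      rw [eq_div_iff hn0]
      linear_combination h7
    have hμval : μ = Complex.ofReal (Real.cos (2*Real.pi*m/n)) := by
      rw [← hz, hzval, Complex.ofReal_cos]
    rcases cos_reduce_int2 n hn m with h | ⟨h, he⟩ | ⟨j, hj1, hj2, hj3⟩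
    · left; rw [hμval, h]; norm_num
    · right; left
      constructor
      · rw [hμval, h]; norm_num
      · exact he
    · right; right
      exact ⟨j, hj1, hj2, by rw [hμval, hj3]⟩

-- ===== fraction reduction =====
lemma reduce (n j m : ℕ) (hj : 1 ≤ j) (hjm : j < m) (hm : m ≤ n + 1) :
    Complex.ofReal (Real.cos (j*Real.pi/m)) = 0 ∨
      ∃ k h : ℕ, 3 ≤ k ∧ k ≤ n+1 ∧ 1 ≤ h ∧ h ≤ k-1 ∧ Nat.gcd h k = 1 ∧
        Complex.ofReal (Real.cos (j*Real.pi/m)) = Complex.ofReal (Real.cos (h*Real.pi/k)) := by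
  set d : ℕ := Nat.gcd j m with hd
  have hdpos : 0 < d := Nat.gcd_pos_of_pos_left m hj
  set h : ℕ := j / d with hh
  set k : ℕ := m / d with hk
  have hcop : Nat.Coprime h k := Nat.coprime_div_gcd_div_gcd hdpos
  have hjd : d * h = j := by rw [hh]; exact Nat.mul_div_cancel' (Nat.gcd_dvd_left j m) 
  have hmd : d * k = m := by rw [hk]; exact Nat.mul_div_cancel' (Nat.gcd_dvd_right j m)
  have hhk : h < k := by
    rw [hh, hk]
    exact Nat.div_lt_div_of_lt_of_dvd (Nat.gcd_dvd_right j m) hjm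
  have hh1 : 1 ≤ h := by
    rcases Nat.eq_zero_or_pos h with h0 | h0
    · rw [h0, mul_zero] at hjd; omega
    · exact h0
  have hk2 : 2 ≤ k := by omega
  have hkn : k ≤ n + 1 := le_trans (by rw [hk]; exact Nat.div_le_self m d) hm
  have hm0 : (m:ℝ) ≠ 0 := Nat.cast_ne_zero.2 (by omega)
  have hk0 : (k:ℝ) ≠ 0 := Nat.cast_ne_zero.2 (by omega)
  have hfrac : (j:ℝ)*Real.pi/m = (h:ℝ)*Real.pi/k := by
    have hnat : j * k = h * m := by
      calc j * k = d * h * k := by rw [hjd]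
        _ = h * (d * k) := by ring
        _ = h * m := by rw [hmd]
    have hcast : (j:ℝ) * k = (h:ℝ) * m := by exact_mod_cast congrArg (Nat.cast : ℕ → ℝ) hnat
    field_simp
    linear_combination hcast
  rcases eq_or_lt_of_le hk2 with hk2' | hk3
  · left
    have hh1' : h = 1 := by omega
    have : (j:ℝ)*Real.pi/m = Real.pi/2 := by
      rw [hfrac, hh1', ← hk2']
      norm_num
    rw [this, Real.cos_pi_div_two]
    norm_num
  · right
    exact ⟨k, h, by omega, hkn, hh1, by omega, hcop, by rw [hfrac]⟩

-- ===== Part B : every eigenvalue is in the stated set =====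
lemma partB (n : ℕ) (hn : 3 ≤ n) (μ : ℂ) (h : Module.End.HasEigenvalue (cycLampM n) μ) :
    μ = 1 ∨ μ = 0 ∨ (μ = -1 ∧ Even n) ∨
      ∃ k h' : ℕ, 3 ≤ k ∧ k ≤ n + 1 ∧ 1 ≤ h' ∧ h' ≤ k - 1 ∧ Nat.gcd h' k = 1 ∧
        μ = Complex.ofReal (Real.cos (h' * Real.pi / k)) := by
  haveI : NeZero n := ⟨by omega⟩
  obtain ⟨S, f, hf, heq⟩ := (eigen_iff n μ).1 h
  obtain ⟨x₀, hx₀⟩ : ∃ x, f x ≠ 0 := by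
    by_contra hc; push_neg at hc; exact hf (funext hc)
  by_cases hS : S = 0
  · -- no edge deleted : cycle walk
    have haco : ∀ i : ZMod n, aco n S i = 1 := by
      intro i; rw [hS]; simp [aco]
    have heq' : ∀ x : ZMod n, 2 * μ * f x = f (x+1) + f (x-1) := by
      intro x
      have := heq x
      rwa [haco, haco, one_mul, one_mul] at this
    set g : ℕ → ℂ := fun t => f (x₀ + (t:ZMod n)) with hg
    have hrec : ∀ t, g (t+2) = 2*μ*g (t+1) - g t := by
      intro t
      have := heq' (x₀ + ((t+1 : ℕ) : ZMod n))
      have e1 : x₀ + ((t+1 : ℕ) : ZMod n) + 1 = x₀ + ((t+2 : ℕ) : ZMod n) := by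
        push_cast; ring
      have e2 : x₀ + ((t+1 : ℕ) : ZMod n) - 1 = x₀ + ((t : ℕ) : ZMod n) := by
        push_cast; ring
      rw [e1, e2] at this
      simp only [hg]
      linear_combination - this
    have hpern : g n = g 0 := by
      simp only [hg]; simp only [ZMod.natCast_self, Nat.cast_zero, add_zero]
    have hpern1 : g (n+1) = g 1 := by
      simp only [hg]
      congr 1
      have : ((n + 1 : ℕ) : ZMod n) = ((1:ℕ) : ZMod n) := by
        push_cast [ZMod.natCast_self]
        ring
      rw [this]
    have hg0 : g 0 ≠ 0 := by
      simp only [hg]; simpa using hx₀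
    rcases cyc μ n (by omega) g hrec hpern hpern1 hg0 with h1 | ⟨h1, h2⟩ | ⟨m, hm1, hm2, hm3⟩
    · exact Or.inl h1
    · exact Or.inr (Or.inr (Or.inl ⟨h1, h2⟩))
    · have hfr : (2*Real.pi*m/n : ℝ) = ((2*m : ℕ):ℝ) * Real.pi / n := by
        push_cast; ring
      rw [hfr] at hm3
      rcases reduce n (2*m) n (by omega) (by omega) (by omega) with h0 | hset
      · exact Or.inr (Or.inl (hm3.trans h0))
      · obtain ⟨k, h', hs⟩ := hset
        exact Or.inr (Or.inr (Or.inr ⟨k, h', hs.1, hs.2.1, hs.2.2.1, hs.2.2.2.1, hs.2.2.2.2.1,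
          hm3.trans hs.2.2.2.2.2⟩))
  · -- some edge deleted : path pieces
    obtain ⟨i₀, hi₀⟩ : ∃ i, S i ≠ 0 := by
      by_contra hc; push_neg at hc; exact hS (funext hc)
    have hPex : ∃ t : ℕ, S (x₀ + (t:ZMod n)) ≠ 0 := by
      refine ⟨(i₀ - x₀).val, ?_⟩
      rw [ZMod.natCast_val, ZMod.cast_id]
      simpa using hi₀
    set r : ℕ := Nat.find hPex with hr
    have hrspec : S (x₀ + (r:ZMod n)) ≠ 0 := Nat.find_spec hPex
    have hrmin : ∀ t, t < r → S (x₀ + (t:ZMod n)) = 0 := by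
      intro t ht
      by_contra hc
      exact Nat.find_min hPex ht hc
    have hrle : r ≤ n - 1 := by
      have : (i₀ - x₀).val ≤ n - 1 := by
        have := ZMod.val_lt (i₀ - x₀); omega
      have hwit2 : S (x₀ + (((i₀ - x₀).val : ℕ) : ZMod n)) ≠ 0 := by
        rw [ZMod.natCast_val, ZMod.cast_id]; simpa using hi₀
      have h9 : Nat.find hPex ≤ (i₀ - x₀).val := Nat.find_le hwit2
      omega
    have hQex : ∃ t : ℕ, S (x₀ - 1 - (t:ZMod n)) ≠ 0 := by
      refine ⟨(x₀ - 1 - i₀).val, ?_⟩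
      rw [ZMod.natCast_val, ZMod.cast_id]
      simpa using hi₀
    set l : ℕ := Nat.find hQex with hl
    have hlspec : S (x₀ - 1 - (l:ZMod n)) ≠ 0 := Nat.find_spec hQex
    have hlmin : ∀ t, t < l → S (x₀ - 1 - (t:ZMod n)) = 0 := by
      intro t ht
      by_contra hc
      exact Nat.find_min hQex ht hc
    have hlle : l ≤ n - 1 - r := by
      have hwit : S (x₀ - 1 - ((n - 1 - r : ℕ):ZMod n)) ≠ 0 := by
        have ecast : x₀ - 1 - ((n - 1 - r : ℕ):ZMod n) = x₀ + (r:ZMod n) := by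
          have : ((r + 1 + (n - 1 - r) : ℕ) : ZMod n) = ((n:ℕ) : ZMod n) := by
            congr 1; omega
          rw [ZMod.natCast_self] at this
          push_cast at this
          linear_combination - this
        rw [ecast]
        exact hrspec
      exact Nat.find_le hwit
    set L : ℕ := l + r + 1 with hL
    have hLn : L ≤ n := by omega
    set ver : ℕ → ZMod n := fun t => x₀ - (l:ZMod n) + (t:ZMod n) with hver
    have hverl : ver l = x₀ := by simp only [hver]; ring
    have hinterior : ∀ s : ℕ, s + 2 ≤ L → S (ver s) = 0 := by
      intro s hs
      rcases lt_or_ge s l with hsl | hsl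
      · have ecast : ver s = x₀ - 1 - ((l - 1 - s : ℕ):ZMod n) := by
          simp only [hver]
          have : ((s + 1 + (l - 1 - s) : ℕ) : ZMod n) = ((l:ℕ) : ZMod n) := by
            congr 1; omega
          push_cast at this
          linear_combination this
        rw [ecast]
        exact hlmin _ (by omega)
      · have ecast : ver s = x₀ + ((s - l : ℕ):ZMod n) := by
          simp only [hver]
          have : ((l + (s - l) : ℕ) : ZMod n) = ((s:ℕ) : ZMod n) := by
            congr 1; omega
          push_cast at this
          linear_combination - this
        rw [ecast]
        exact hrmin _ (by omega)
    have hlast : S (ver (L - 1)) ≠ 0 := by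
      have ecast : ver (L-1) = x₀ + (r:ZMod n) := by
        simp only [hver]
        have h1 : ((L - 1 : ℕ) : ZMod n) = ((l + r : ℕ) : ZMod n) := by congr 1 <;> omega
        rw [h1]
        push_cast
        ring
      rw [ecast]
      exact hrspec
    set w : ℕ → ℂ := fun t => if t < L then f (ver t) else 0 with hw
    have hend : w L = 0 := by simp only [hw]; simp
    have hne : ∃ t, t < L ∧ w t ≠ 0 := by
      refine ⟨l, by omega, ?_⟩
      simp only [hw]
      simp only [if_pos (show l < L by omega)]
      rw [hverl]
      exact hx₀
    have hacoz : ∀ i : ZMod n, S i ≠ 0 → aco n S i = 0 := by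
      intro i hi; simp [aco, hi]
    have hacoo : ∀ i : ZMod n, S i = 0 → aco n S i = 1 := by
      intro i hi; simp [aco, hi]
    have hstep : ∀ t, t + 1 ≤ L → w (t+1) = 2*μ*w t - (if t = 0 then 0 else w (t-1)) := by
      intro t ht
      have hkey := heq (ver t)
      have hplus : ver t + 1 = ver (t+1) := by simp only [hver]; push_cast; ring
      rcases Nat.eq_zero_or_pos t with ht0 | ht0
      · subst ht0
        have hleft : ver 0 - 1 = x₀ - 1 - (l:ZMod n) := by simp only [hver]; push_cast; ring
        rw [if_pos rfl, sub_zero]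
        rw [hplus, hleft, hacoz _ hlspec, zero_mul, add_zero] at hkey
        rcases Nat.lt_or_ge 1 L with hL2 | hL2
        · -- L ≥ 2 : edge ver 0 is interior
          rw [hacoo _ (hinterior 0 (by omega)), one_mul] at hkey
          simp only [hw]
          simp only [if_pos (show 0 < L by omega), if_pos hL2]
          linear_combination - hkey
        · -- L = 1
          rw [hacoz _ (by rw [show (0:ℕ) = L - 1 by omega]; exact hlast), zero_mul] at hkey
          simp only [hw]
          simp only [if_neg (show ¬ (1 < L) by omega), if_pos (show 0 < L by omega)]
          linear_combination - hkey
      · have hleft : ver t - 1 = ver (t-1) := by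
          simp only [hver]
          have : ((t - 1 + 1 : ℕ) : ZMod n) = ((t:ℕ) : ZMod n) := by congr 1; omega
          push_cast at this
          linear_combination - this
        rw [if_neg (by omega)]
        rw [hplus, hleft, hacoo _ (hinterior (t-1) (by omega)), one_mul] at hkey
        rcases Nat.lt_or_ge (t+1) L with htL | htL
        · -- interior
          rw [hacoo _ (hinterior t (by omega)), one_mul] at hkey
          simp only [hw]
          simp only [if_pos (show t+1 < L from htL), if_pos (show t < L by omega),
            if_pos (show t-1 < L by omega)]
          linear_combination - hkey
        · -- t + 1 = L
          have htL' : t = L - 1 := by omega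
          rw [htL' ] at hkey ⊢
          rw [hacoz _ hlast, zero_mul, zero_add] at hkey
          simp only [hw]
          simp only [if_neg (show ¬ (L - 1 + 1 < L) by omega),
            if_pos (show L - 1 < L by omega), if_pos (show L - 1 - 1 < L by omega)]
          linear_combination - hkey
    obtain ⟨j, hj1, hj2, hj3⟩ := cheb μ L (by omega) w hstep hend hne
    have hfr : ((L:ℝ)+1) = ((L+1 : ℕ):ℝ) := by push_cast; ring
    rw [hfr] at hj3
    rcases reduce n j (L+1) hj1 (by omega) (by omega) with h0 | hset
    · exact Or.inr (Or.inl (hj3.trans h0))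
    · obtain ⟨k, h', hs⟩ := hset
      exact Or.inr (Or.inr (Or.inr ⟨k, h', hs.1, hs.2.1, hs.2.2.1, hs.2.2.2.1, hs.2.2.2.2.1,
        hj3.trans hs.2.2.2.2.2⟩))

-- ===== Part A : membership constructions =====
lemma one_ne_zero_fn : (fun (_ : ZMod n) => (1:ℂ)) ≠ 0 := by
  intro h
  have := congrFun h 0
  simp at this

lemma partA_one : Module.End.HasEigenvalue (cycLampM n) 1 := by
  apply (eigen_iff n 1).2
  refine ⟨0, fun _ => 1, one_ne_zero_fn n, ?_⟩
  intro x
  simp [aco]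
  norm_num

lemma partA_zero : Module.End.HasEigenvalue (cycLampM n) 0 := by
  apply (eigen_iff n 0).2
  refine ⟨fun _ => 1, fun _ => 1, one_ne_zero_fn n, ?_⟩
  intro x
  simp [aco]

lemma neg_one_pow_mod (a b : ℕ) (hab : a % 2 = b % 2) : ((-1:ℂ))^a = (-1)^b := by
  rcases Nat.even_or_odd a with ha | ha
  · have hb : Even b := by rw [Nat.even_iff] at *; omega
    rw [ha.neg_one_pow, hb.neg_one_pow]
  · have hb : Odd b := by rw [Nat.odd_iff] at *; omega
    rw [ha.neg_one_pow, hb.neg_one_pow]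

lemma partA_negone (hn : 3 ≤ n) (hev : Even n) :
    Module.End.HasEigenvalue (cycLampM n) (-1) := by
  apply (eigen_iff n (-1)).2
  set f : ZMod n → ℂ := fun x => (-1)^(x.val) with hf
  have hkey : ∀ x : ZMod n, f (x + 1) = - f x := by
    intro x
    rw [hf]
    simp only
    have hva : (x+1).val = (x.val + (1:ZMod n).val) % n := ZMod.val_add x 1
    have hv1 : (1 : ZMod n).val = 1 := by
      rw [← Nat.cast_one (R := ZMod n), ZMod.val_cast_of_lt (by omega)]
    have h2 : 2 ∣ n := hev.two_dvd
    have hpar : (x+1).val % 2 = (x.val + 1) % 2 := by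
      rw [hva, hv1, Nat.mod_mod_of_dvd _ h2]
    rw [neg_one_pow_mod _ (x.val + 1) hpar, pow_succ]
    ring
  refine ⟨0, f, ?_, ?_⟩
  · intro h
    have := congrFun h 0
    rw [hf] at this
    simp at this
  · intro x
    have h1 := hkey x
    have h2 := hkey (x - 1)
    rw [sub_add_cancel] at h2
    have haco : ∀ i : ZMod n, aco n (0 : ZMod n → ZMod 2) i = 1 := by
      intro i; simp [aco]
    rw [haco, haco, one_mul, one_mul, h1]
    rw [show f (x-1) = - f x by linear_combination h2]
    ring

lemma sin_rec (θ : ℝ) (v : ℕ) :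
    2 * Real.cos θ * Real.sin ((v+1) * θ) = Real.sin ((v+2) * θ) + Real.sin (v * θ) := by
  rw [show ((v:ℝ)+2)*θ = ((v:ℝ)+1)*θ + θ by ring, show (v:ℝ)*θ = ((v:ℝ)+1)*θ - θ by ring,
    Real.sin_add, Real.sin_sub]
  ring

lemma partA_cos (hn : 3 ≤ n) (k h : ℕ) (hk3 : 3 ≤ k) (hkn : k ≤ n + 1)
    (hh1 : 1 ≤ h) (hhk : h ≤ k - 1) :
    Module.End.HasEigenvalue (cycLampM n) (Complex.ofReal (Real.cos (h * Real.pi / k))) := by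
  apply (eigen_iff n _).2
  set θ : ℝ := h * Real.pi / k with hθ
  have hk0 : (k:ℝ) ≠ 0 := Nat.cast_ne_zero.2 (by omega)
  have hsk : Real.sin ((k:ℝ) * θ) = 0 := by
    rw [show (k:ℝ)*θ = h * Real.pi by rw [hθ]; field_simp]
    exact Real.sin_nat_mul_pi h
  set S : ZMod n → ZMod 2 := fun i => if i.val = k - 2 ∨ i.val = n - 1 then 1 else 0 with hS
  set f : ZMod n → ℂ := fun x =>
    if x.val ≤ k - 2 then ((Real.sin ((x.val + 1) * θ) : ℝ) : ℂ) else 0 with hf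
  have hfval : ∀ w : ℕ, f ((w:ℕ) : ZMod n)
      = if w % n ≤ k - 2 then Complex.ofReal (Real.sin ((((w % n : ℕ) : ℝ) + 1) * θ)) else 0 := by
    intro w
    rw [hf]
    simp only [ZMod.val_natCast]
  have hacov : ∀ w : ℕ, aco n S ((w:ℕ) : ZMod n)
      = if (w % n = k - 2 ∨ w % n = n - 1) then 0 else 1 := by
    intro w
    rw [hS]
    unfold aco
    simp only [ZMod.val_natCast]
    by_cases hc : (w % n = k - 2 ∨ w % n = n - 1)
    · rw [if_pos hc, if_pos hc]
      norm_num
    · rw [if_neg hc, if_neg hc]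
      norm_num
  refine ⟨S, f, ?_, ?_⟩
  · intro hzero
    have h0 := congrFun hzero ((0:ℕ) : ZMod n)
    rw [hfval 0] at h0
    rw [Nat.zero_mod, if_pos (show (0:ℕ) ≤ k - 2 by omega)] at h0
    simp only [Pi.zero_apply] at h0
    have hre : Real.sin ((((0:ℕ):ℝ) + 1) * θ) = 0 := by exact_mod_cast h0
    norm_num at hre
    have hpos : 0 < Real.sin θ := by
      apply Real.sin_pos_of_pos_of_lt_pi
      · have h1 : (0:ℝ) < h := by exact_mod_cast hh1
        have h2 : (0:ℝ) < k := by
          have : (0:ℕ) < k := by omega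
          exact_mod_cast this
        rw [hθ]
        exact div_pos (mul_pos h1 Real.pi_pos) h2
      · rw [hθ, div_lt_iff₀ (by
          have : (0:ℕ) < k := by omega
          exact_mod_cast this)]
        have h3 : (h:ℝ) < k := by exact_mod_cast (show h < k by omega)
        nlinarith [Real.pi_pos]
    rw [hre] at hpos
    exact lt_irrefl 0 hpos
  · intro x
    -- replace x by its value
    obtain ⟨v, hv, rfl⟩ : ∃ v : ℕ, v < n ∧ ((v:ℕ) : ZMod n) = x := by
      refine ⟨x.val, ZMod.val_lt x, ?_⟩
      rw [ZMod.natCast_val, ZMod.cast_id]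
    have hplus : ((v:ℕ) : ZMod n) + 1 = (((v+1 : ℕ)) : ZMod n) := by push_cast; ring
    have hminus : ((v:ℕ) : ZMod n) - 1 = (((v + (n-1) : ℕ)) : ZMod n) := by
      have : (((v + (n-1) + 1 : ℕ)) : ZMod n) = (((v + n : ℕ)) : ZMod n) := by
        congr 1
        omega
      push_cast [ZMod.natCast_self] at this
      push_cast
      linear_combination - this
    rw [hplus, hminus, hfval, hfval, hfval, hacov, hacov]
    have hvmod : v % n = v := Nat.mod_eq_of_lt hv
    rw [hvmod]
    -- trig facts over ℂ
    have hrecC : ∀ u : ℕ, 2 * Complex.cos (θ:ℂ) * Complex.sin (((u:ℂ)+1)*(θ:ℂ))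
        = Complex.sin (((u:ℂ)+2)*(θ:ℂ)) + Complex.sin ((u:ℂ)*(θ:ℂ)) := by
      intro u
      have hr := sin_rec θ u
      have := congrArg (Complex.ofReal) hr
      push_cast at this
      convert this using 3 <;> push_cast <;> ring
    have hskC : Complex.sin ((k:ℂ)*(θ:ℂ)) = 0 := by
      have := congrArg (Complex.ofReal) hsk
      push_cast at this
      convert this using 2
    have hA : (v + 1) % n = if v = n - 1 then 0 else v + 1 := by
      rcases eq_or_ne v (n-1) with h' | h'
      · rw [if_pos h', h', show n - 1 + 1 = n by omega, Nat.mod_self]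
      · rw [if_neg h']
        exact Nat.mod_eq_of_lt (by omega)
    have hB : (v + (n - 1)) % n = if v = 0 then n - 1 else v - 1 := by
      rcases eq_or_ne v 0 with h' | h'
      · rw [if_pos h', h', zero_add]
        exact Nat.mod_eq_of_lt (by omega)
      · rw [if_neg h', show v + (n-1) = (v-1) + n by omega, Nat.add_mod_right]
        exact Nat.mod_eq_of_lt (by omega)
    rcases eq_or_ne v 0 with hv0 | hv0
    · -- v = 0
      subst hv0
      rw [if_pos (show (0:ℕ) = 0 by rfl)] at hB
      rw [if_neg (show (0:ℕ) ≠ n - 1 by omega)] at hA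
      rw [hA, hB]
      rw [if_neg (show ¬ ((0:ℕ) = k - 2 ∨ (0:ℕ) = n - 1) by omega)]
      rw [if_pos (show (0:ℕ) ≤ k - 2 by omega)]
      rw [if_pos (show (0:ℕ)+1 ≤ k - 2 by omega)]
      rw [if_pos (show (n-1 = k - 2 ∨ n-1 = n-1) from Or.inr rfl)]
      have hr0 := hrecC 0
      push_cast
      push_cast at hr0
      norm_num at hr0 ⊢
      linear_combination hr0
    · rcases lt_or_ge v (k-2) with hvK | hvK
      · -- 1 ≤ v < K : interior
        rw [if_neg hv0] at hB
        rw [if_neg (show v ≠ n - 1 by omega)] at hA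
        rw [hA, hB]
        rw [if_neg (show ¬ (v = k - 2 ∨ v = n - 1) by omega)]
        rw [if_neg (show ¬ (v - 1 = k - 2 ∨ v - 1 = n - 1) by omega)]
        rw [if_pos (show v ≤ k - 2 by omega)]
        rw [if_pos (show v + 1 ≤ k - 2 by omega)]
        rw [if_pos (show v - 1 ≤ k - 2 by omega)]
        have hvm : (((v-1:ℕ)):ℝ) + 1 = (v:ℝ) := by
          have h8 : ((v - 1 + 1 : ℕ) : ℝ) = (v:ℝ) :=
            congrArg (Nat.cast : ℕ → ℝ) (show v - 1 + 1 = v by omega)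
          push_cast at h8
          linarith
        rw [hvm]
        have hrv := hrecC v
        push_cast
        push_cast at hrv
        ring_nf at hrv ⊢
        linear_combination hrv
      · rcases eq_or_ne v (k-2) with hvK' | hvK'
        · -- v = K : right end of arc
          rw [if_neg hv0] at hB
          rw [hB]
          rw [if_pos (Or.inl hvK')]
          rw [if_pos (show v ≤ k - 2 by omega)]
          rw [if_neg (show ¬ (v - 1 = k - 2 ∨ v - 1 = n - 1) by omega)]
          rw [if_pos (show v - 1 ≤ k - 2 by omega)]
          have hvm : (((v-1:ℕ)):ℝ) + 1 = (v:ℝ) := by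
            have h8 : ((v - 1 + 1 : ℕ) : ℝ) = (v:ℝ) :=
              congrArg (Nat.cast : ℕ → ℝ) (show v - 1 + 1 = v by omega)
            push_cast at h8
            linarith
          rw [hvm]
          have hrv := hrecC v
          have hc2 : ((v:ℂ)+2)*(θ:ℂ) = (k:ℂ)*(θ:ℂ) := by
            have hcc : ((v + 2 : ℕ) : ℂ) = ((k:ℕ) : ℂ) :=
              congrArg (Nat.cast : ℕ → ℂ) (show v + 2 = k by omega)
            push_cast at hcc
            rw [hcc]
          rw [hc2, hskC] at hrv
          push_cast
          push_cast at hrv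
          linear_combination hrv
        · -- v > K : outside the arc
          have hvK2 : k - 2 < v := by omega
          rw [if_neg (show ¬ v ≤ k - 2 by omega)]
          rcases eq_or_ne v (n-1) with hvn | hvn
          · -- v = n-1 : left aco vanishes
            rw [if_pos (Or.inr hvn)]
            rw [if_neg hv0] at hB
            rw [hB]
            rcases eq_or_ne (v-1) (k-2) with hB' | hB'
            · rw [if_pos (Or.inl hB')]
              ring
            · rw [if_neg (show ¬ (v - 1 = k - 2 ∨ v - 1 = n - 1) by omega)]
              rw [if_neg (show ¬ (v - 1 ≤ k - 2) by omega)]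
              ring
          · -- v < n-1
            rw [if_neg (show v ≠ n - 1 from hvn)] at hA
            rw [hA]
            rw [if_neg (show ¬ (v = k - 2 ∨ v = n - 1) by omega)]
            rw [if_neg (show ¬ (v + 1 ≤ k - 2) by omega)]
            rw [if_neg hv0] at hB
            rw [hB]
            rcases eq_or_ne (v-1) (k-2) with hB' | hB'
            · rw [if_pos (Or.inl hB')]
              ring
            · rw [if_neg (show ¬ (v - 1 = k - 2 ∨ v - 1 = n - 1) by omega)]
              rw [if_neg (show ¬ (v - 1 ≤ k - 2) by omega)]
              ring

end CLS

open Module.End in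
/-- The set of eigenvalues of the Markov operator of the edge
lamplighter random walk on the discrete circle `C_n` equals
`{1} ∪ {0} ∪ {cos(hπ/k) : 3 ≤ k ≤ n+1, 1 ≤ h ≤ k−1, gcd(h,k)=1}` for `n` odd, and
`{1} ∪ {−1} ∪ {0} ∪ {cos(hπ/k) : 3 ≤ k ≤ n+1, 1 ≤ h ≤ k−1, gcd(h,k)=1}` for `n` even. -/
theorem cycle_lamplighter_spectrum (n : ℕ) (hn : 3 ≤ n) :
    (Odd n →
      {μ : ℂ | Module.End.HasEigenvalue (cycLampM n) μ}
        = ({1} ∪ {0} ∪ {μ : ℂ | ∃ k h : ℕ, 3 ≤ k ∧ k ≤ n + 1 ∧ 1 ≤ h ∧ h ≤ k - 1 ∧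
            Nat.gcd h k = 1 ∧ μ = Complex.ofReal (Real.cos (h * Real.pi / k))}))
    ∧ (Even n →
      {μ : ℂ | Module.End.HasEigenvalue (cycLampM n) μ}
        = ({1} ∪ {0} ∪ {-1} ∪ {μ : ℂ | ∃ k h : ℕ, 3 ≤ k ∧ k ≤ n + 1 ∧ 1 ≤ h ∧ h ≤ k - 1 ∧
            Nat.gcd h k = 1 ∧ μ = Complex.ofReal (Real.cos (h * Real.pi / k))})) := by
  haveI : NeZero n := ⟨by omega⟩
  constructor
  · intro hodd
    ext μ
    simp only [Set.mem_setOf_eq, Set.mem_union, Set.mem_singleton_iff]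
    constructor
    · intro h
      rcases CLS.partB n hn μ h with h1 | h1 | ⟨h1, h2⟩ | ⟨k, h', rest⟩
      · exact Or.inl (Or.inl h1)
      · exact Or.inl (Or.inr h1)
      · exact absurd h2 (by
          rw [Nat.even_iff]
          rw [Nat.odd_iff] at hodd
          omega)
      · exact Or.inr ⟨k, h', rest⟩
    · rintro ((h1 | h1) | ⟨k, h', hk3, hkn, hh1, hhk, hcop, rfl⟩)
      · rw [h1]; exact CLS.partA_one n
      · rw [h1]; exact CLS.partA_zero n
      · exact CLS.partA_cos n hn k h' hk3 hkn hh1 hhk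
  · intro heven
    ext μ
    simp only [Set.mem_setOf_eq, Set.mem_union, Set.mem_singleton_iff]
    constructor
    · intro h
      rcases CLS.partB n hn μ h with h1 | h1 | ⟨h1, h2⟩ | ⟨k, h', rest⟩
      · exact Or.inl (Or.inl (Or.inl h1))
      · exact Or.inl (Or.inl (Or.inr h1))
      · exact Or.inl (Or.inr h1)
      · exact Or.inr ⟨k, h', rest⟩
    · rintro (((h1 | h1) | h1) | ⟨k, h', hk3, hkn, hh1, hhk, hcop, rfl⟩)
      · rw [h1]; exact CLS.partA_one n
      · rw [h1]; exact CLS.partA_zero n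
      · rw [h1]; exact CLS.partA_negone n hn heven
      · exact CLS.partA_cos n hn k h' hk3 hkn hh1 hhk
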